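/- arXiv:2206.12717 — 8 statements merged into one kernel-verified Lean document; each statement's English description precedes it below -/
import Mathlib

section
/- For the classical Zernike Hamiltonian H = p1^2 + p2^2 + γ1(q1 p1 + q2 p2) + γ2(q1 p1 + q2 p2)^2, the function I = p2^2 + γ1 q2 p2 + γ2 (q1^2 + q2^2) p2^2 is a constant of the motion, i.e. {H, I} = 0. -/
/-!
Write `D = q1 p1 + q2 p2` and `k = γ1 + 2 γ2 D = ∂H/∂D`, so that `∂H/∂qᵢ = k pᵢ` and
`∂H/∂pᵢ = 2 pᵢ + k qᵢ`. The terms `γ1 q2 p2` and `γ2 |q|² p2²` of `I` are invariant under the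
dilation `(q, p) ↦ (λ q, p / λ)` generated by `D`, so their contributions to `{H, I}` through `k`
cancel; what remains is `2 k p2² - 2 p · ∂I/∂q = 2 p2² (k - γ1 - 2 γ2 D) = 0`.
-/

open Real

/-- Canonical Poisson bracket on ℝ⁴ with coordinates (q1, q2, p1, p2). -/
noncomputable def pb (f g : ℝ → ℝ → ℝ → ℝ → ℝ) : ℝ → ℝ → ℝ → ℝ → ℝ :=
  fun q1 q2 p1 p2 =>
      deriv (fun x => f x q2 p1 p2) q1 * deriv (fun x => g q1 q2 x p2) p1
    + deriv (fun x => f q1 x p1 p2) q2 * deriv (fun x => g q1 q2 p1 x) p2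
    - deriv (fun x => f q1 q2 x p2) p1 * deriv (fun x => g x q2 p1 p2) q1
    - deriv (fun x => f q1 q2 p1 x) p2 * deriv (fun x => g q1 x p1 p2) q2

namespace Zernike

variable (γ1 γ2 : ℝ)

def hamiltonian (q1 q2 p1 p2 : ℝ) : ℝ :=
  p1 ^ 2 + p2 ^ 2 + γ1 * (q1 * p1 + q2 * p2) + γ2 * (q1 * p1 + q2 * p2) ^ 2

def integralOfMotion (q1 q2 _p1 p2 : ℝ) : ℝ :=
  p2 ^ 2 + γ1 * q2 * p2 + γ2 * (q1 ^ 2 + q2 ^ 2) * p2 ^ 2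

variable (q1 q2 p1 p2 : ℝ)

theorem deriv_hamiltonian_q1 :
    deriv (fun x => hamiltonian γ1 γ2 x q2 p1 p2) q1
      = (γ1 + 2 * γ2 * (q1 * p1 + q2 * p2)) * p1 := by
  simp (disch := fun_prop) only [hamiltonian, deriv_fun_add, deriv_fun_mul, deriv_fun_pow,
    deriv_id'', deriv_const]
  ring

theorem deriv_hamiltonian_q2 :
    deriv (fun x => hamiltonian γ1 γ2 q1 x p1 p2) q2
      = (γ1 + 2 * γ2 * (q1 * p1 + q2 * p2)) * p2 := by
  simp (disch := fun_prop) only [hamiltonian, deriv_fun_add, deriv_fun_mul, deriv_fun_pow,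
    deriv_id'', deriv_const]
  ring

theorem deriv_hamiltonian_p1 :
    deriv (fun x => hamiltonian γ1 γ2 q1 q2 x p2) p1
      = 2 * p1 + (γ1 + 2 * γ2 * (q1 * p1 + q2 * p2)) * q1 := by
  simp (disch := fun_prop) only [hamiltonian, deriv_fun_add, deriv_fun_mul, deriv_fun_pow,
    deriv_id'', deriv_const, deriv_const_mul_id]
  ring

theorem deriv_hamiltonian_p2 :
    deriv (fun x => hamiltonian γ1 γ2 q1 q2 p1 x) p2
      = 2 * p2 + (γ1 + 2 * γ2 * (q1 * p1 + q2 * p2)) * q2 := by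
  simp (disch := fun_prop) only [hamiltonian, deriv_fun_add, deriv_fun_mul, deriv_fun_pow,
    deriv_id'', deriv_const, deriv_const_mul_id]
  ring

theorem deriv_integralOfMotion_q1 :
    deriv (fun x => integralOfMotion γ1 γ2 x q2 p1 p2) q1 = 2 * γ2 * q1 * p2 ^ 2 := by
  simp (disch := fun_prop) only [integralOfMotion, deriv_fun_add, deriv_fun_mul, deriv_fun_pow,
    deriv_id'', deriv_const]
  ring

theorem deriv_integralOfMotion_p1 :
    deriv (fun x => integralOfMotion γ1 γ2 q1 q2 x p2) p1 = 0 :=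
  deriv_const _ _

theorem deriv_integralOfMotion_q2 :
    deriv (fun x => integralOfMotion γ1 γ2 q1 x p1 p2) q2 = γ1 * p2 + 2 * γ2 * q2 * p2 ^ 2 := by
  simp (disch := fun_prop) only [integralOfMotion, deriv_fun_add, deriv_fun_mul, deriv_fun_pow,
    deriv_id'', deriv_const, deriv_const_mul_id]
  ring

theorem deriv_integralOfMotion_p2 :
    deriv (fun x => integralOfMotion γ1 γ2 q1 q2 p1 x) p2
      = 2 * p2 + γ1 * q2 + 2 * γ2 * (q1 ^ 2 + q2 ^ 2) * p2 := by
  simp (disch := fun_prop) only [integralOfMotion, deriv_fun_add, deriv_fun_mul, deriv_fun_pow,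
    deriv_id'', deriv_const, deriv_const_mul_id]
  ring

end Zernike

theorem zernike_I_is_constant_of_motion (γ1 γ2 : ℝ) :
    pb (fun q1 q2 p1 p2 => p1^2 + p2^2 + γ1*(q1*p1 + q2*p2) + γ2*(q1*p1 + q2*p2)^2)
       (fun q1 q2 p1 p2 => p2^2 + γ1*q2*p2 + γ2*(q1^2 + q2^2)*p2^2) = 0 := by
  change pb (Zernike.hamiltonian γ1 γ2) (Zernike.integralOfMotion γ1 γ2) = 0
  funext q1 q2 p1 p2
  simp only [pb, Pi.zero_apply, Zernike.deriv_hamiltonian_q1, Zernike.deriv_hamiltonian_q2,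
    Zernike.deriv_hamiltonian_p1, Zernike.deriv_hamiltonian_p2, Zernike.deriv_integralOfMotion_q1,
    Zernike.deriv_integralOfMotion_q2, Zernike.deriv_integralOfMotion_p1,
    Zernike.deriv_integralOfMotion_p2]
  ring
end

section
/- Define L1 = (q1 p2 - q2 p1)/2, L2 = (I' - I)/2 where I = p2^2 + γ1 q2 p2 + γ2(q1^2+q2^2)p2^2 and I' = p1^2 + γ1 q1 p1 + γ2(q1^2+q2^2)p1^2, and L3 = {L1, L2}. Then L3 = (1 + γ2(q1^2+q2^2)) p1 p2 + (γ1/2)(q1 p2 + q2 p1). -/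
open Real

theorem pb_halfAngularMomentum_left (g : ℝ → ℝ → ℝ → ℝ → ℝ) :
    pb (fun q1 q2 p1 p2 => (q1*p2 - q2*p1)/2) g = fun q1 q2 p1 p2 =>
      (p2 * deriv (fun x => g q1 q2 x p2) p1 - p1 * deriv (fun x => g q1 q2 p1 x) p2
        + q2 * deriv (fun x => g x q2 p1 p2) q1 - q1 * deriv (fun x => g q1 x p1 p2) q2) / 2 := by
  funext q1 q2 p1 p2
  simp (disch := fun_prop) [pb]
  ring

theorem zernike_L3_explicit (γ1 γ2 : ℝ) :
    pb (fun q1 q2 p1 p2 => (q1*p2 - q2*p1)/2)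
       (fun q1 q2 p1 p2 =>
         ((p1^2 + γ1*q1*p1 + γ2*(q1^2 + q2^2)*p1^2)
          - (p2^2 + γ1*q2*p2 + γ2*(q1^2 + q2^2)*p2^2))/2)
      = fun q1 q2 p1 p2 =>
          (1 + γ2*(q1^2 + q2^2))*p1*p2 + (γ1/2)*(q1*p2 + q2*p1) := by
  rw [pb_halfAngularMomentum_left]
  funext q1 q2 p1 p2
  simp (disch := fun_prop)
  ring
end

section
/- With L1 = C/2, L2 = (I'-I)/2, L3 = {L1,L2} as constructed from the Zernike integrals, the Poisson brackets satisfy {L1, L3} = -L2 and {L2, L3} = -L1(γ1^2 + 2γ2 H + 8γ2^2 L1^2), where H = p1^2 + p2^2 + γ1(q1 p1 + q2 p2) + γ2(q1 p1 + q2 p2)^2. -/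
/-! Once the gradients of `L1`, `L2`, `L3` are known, each bracket is the symplectic pairing of
two explicit polynomial gradients, and both identities become polynomial identities. -/

open Real

structure HasPartials (f fq1 fq2 fp1 fp2 : ℝ → ℝ → ℝ → ℝ → ℝ) : Prop where
  q1 : ∀ q1 q2 p1 p2, HasDerivAt (fun x => f x q2 p1 p2) (fq1 q1 q2 p1 p2) q1
  q2 : ∀ q1 q2 p1 p2, HasDerivAt (fun x => f q1 x p1 p2) (fq2 q1 q2 p1 p2) q2
  p1 : ∀ q1 q2 p1 p2, HasDerivAt (fun x => f q1 q2 x p2) (fp1 q1 q2 p1 p2) p1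
  p2 : ∀ q1 q2 p1 p2, HasDerivAt (fun x => f q1 q2 p1 x) (fp2 q1 q2 p1 p2) p2

theorem pb_eq_of_hasPartials {f fq1 fq2 fp1 fp2 g gq1 gq2 gp1 gp2 : ℝ → ℝ → ℝ → ℝ → ℝ}
    (hf : HasPartials f fq1 fq2 fp1 fp2) (hg : HasPartials g gq1 gq2 gp1 gp2) :
    pb f g = fun q1 q2 p1 p2 =>
      fq1 q1 q2 p1 p2 * gp1 q1 q2 p1 p2 + fq2 q1 q2 p1 p2 * gp2 q1 q2 p1 p2
        - fp1 q1 q2 p1 p2 * gq1 q1 q2 p1 p2 - fp2 q1 q2 p1 p2 * gq2 q1 q2 p1 p2 := by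
  funext q1 q2 p1 p2
  simp only [pb, (hf.q1 ..).deriv, (hf.q2 ..).deriv, (hf.p1 ..).deriv, (hf.p2 ..).deriv,
    (hg.q1 ..).deriv, (hg.q2 ..).deriv, (hg.p1 ..).deriv, (hg.p2 ..).deriv]

theorem hasDerivAt_of_deriv_eq {f : ℝ → ℝ} {f' x : ℝ} (hf : DifferentiableAt ℝ f x)
    (h : deriv f x = f') : HasDerivAt f f' x := by
  rw [← h]; exact hf.hasDerivAt

noncomputable section

def zernikeL1 : ℝ → ℝ → ℝ → ℝ → ℝ := fun q1 q2 p1 p2 => (q1*p2 - q2*p1)/2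

def zernikeL2 (γ1 γ2 : ℝ) : ℝ → ℝ → ℝ → ℝ → ℝ := fun q1 q2 p1 p2 =>
  ((p1^2 + γ1*q1*p1 + γ2*(q1^2 + q2^2)*p1^2) - (p2^2 + γ1*q2*p2 + γ2*(q1^2 + q2^2)*p2^2))/2

def zernikeL3 (γ1 γ2 : ℝ) : ℝ → ℝ → ℝ → ℝ → ℝ := fun q1 q2 p1 p2 =>
  (1 + γ2*(q1^2 + q2^2))*p1*p2 + (γ1/2)*(q1*p2 + q2*p1)

theorem hasPartials_zernikeL1 :
    HasPartials zernikeL1 (fun _ _ _ p2 => p2/2) (fun _ _ p1 _ => -p1/2)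
      (fun _ q2 _ _ => -q2/2) (fun q1 _ _ _ => q1/2) := by
  refine ⟨fun _ _ _ _ => ?_, fun _ _ _ _ => ?_, fun _ _ _ _ => ?_, fun _ _ _ _ => ?_⟩ <;>
  · refine hasDerivAt_of_deriv_eq (by unfold zernikeL1; fun_prop) ?_
    simp (disch := fun_prop) only [zernikeL1, deriv_div_const, deriv_fun_sub, deriv_mul_const,
      deriv_const_mul_id', deriv_id'', deriv_const']
    ring

theorem hasPartials_zernikeL2 (γ1 γ2 : ℝ) :
    HasPartials (zernikeL2 γ1 γ2)
      (fun q1 _ p1 p2 => (γ1*p1 + 2*γ2*q1*(p1^2 - p2^2))/2)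
      (fun _ q2 p1 p2 => (-γ1*p2 + 2*γ2*q2*(p1^2 - p2^2))/2)
      (fun q1 q2 p1 _ => (2*p1 + γ1*q1 + 2*γ2*(q1^2 + q2^2)*p1)/2)
      (fun q1 q2 _ p2 => -(2*p2 + γ1*q2 + 2*γ2*(q1^2 + q2^2)*p2)/2) := by
  refine ⟨fun _ _ _ _ => ?_, fun _ _ _ _ => ?_, fun _ _ _ _ => ?_, fun _ _ _ _ => ?_⟩ <;>
  · refine hasDerivAt_of_deriv_eq (by unfold zernikeL2; fun_prop) ?_
    simp (disch := fun_prop) only [zernikeL2, deriv_div_const, deriv_fun_add, deriv_fun_sub,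
      deriv_fun_mul, deriv_fun_pow, deriv_const_mul_id', deriv_id'', deriv_const']
    ring

theorem hasPartials_zernikeL3 (γ1 γ2 : ℝ) :
    HasPartials (zernikeL3 γ1 γ2)
      (fun q1 _ p1 p2 => 2*γ2*q1*p1*p2 + γ1/2*p2)
      (fun _ q2 p1 p2 => 2*γ2*q2*p1*p2 + γ1/2*p1)
      (fun q1 q2 _ p2 => (1 + γ2*(q1^2 + q2^2))*p2 + γ1/2*q2)
      (fun q1 q2 p1 _ => (1 + γ2*(q1^2 + q2^2))*p1 + γ1/2*q1) := by
  refine ⟨fun _ _ _ _ => ?_, fun _ _ _ _ => ?_, fun _ _ _ _ => ?_, fun _ _ _ _ => ?_⟩ <;>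
  · refine hasDerivAt_of_deriv_eq (by unfold zernikeL3; fun_prop) ?_
    simp (disch := fun_prop) only [zernikeL3, deriv_fun_add, deriv_fun_mul, deriv_fun_pow,
      deriv_const_mul_id', deriv_id'', deriv_const']
    ring

end

theorem zernike_racah_algebra (γ1 γ2 : ℝ)
    (L1 L2 L3 H : ℝ → ℝ → ℝ → ℝ → ℝ)
    (hL1 : L1 = fun q1 q2 p1 p2 => (q1*p2 - q2*p1)/2)
    (hL2 : L2 = fun q1 q2 p1 p2 =>
      ((p1^2 + γ1*q1*p1 + γ2*(q1^2 + q2^2)*p1^2)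
       - (p2^2 + γ1*q2*p2 + γ2*(q1^2 + q2^2)*p2^2))/2)
    (hL3 : L3 = fun q1 q2 p1 p2 =>
      (1 + γ2*(q1^2 + q2^2))*p1*p2 + (γ1/2)*(q1*p2 + q2*p1))
    (hH : H = fun q1 q2 p1 p2 =>
      p1^2 + p2^2 + γ1*(q1*p1 + q2*p2) + γ2*(q1*p1 + q2*p2)^2) :
    pb L1 L3 = -L2 ∧
    pb L2 L3 = fun q1 q2 p1 p2 =>
      -(L1 q1 q2 p1 p2) * (γ1^2 + 2*γ2*(H q1 q2 p1 p2) + 8*γ2^2*(L1 q1 q2 p1 p2)^2) := by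
  obtain rfl : L1 = zernikeL1 := hL1
  obtain rfl : L2 = zernikeL2 γ1 γ2 := hL2
  obtain rfl : L3 = zernikeL3 γ1 γ2 := hL3
  subst hH
  rw [pb_eq_of_hasPartials hasPartials_zernikeL1 (hasPartials_zernikeL3 γ1 γ2),
    pb_eq_of_hasPartials (hasPartials_zernikeL2 γ1 γ2) (hasPartials_zernikeL3 γ1 γ2)]
  constructor <;> funext q1 q2 p1 p2 <;> simp only [zernikeL1, zernikeL2, Pi.neg_apply] <;> ring
end

section
/- For the cubic Hamiltonian H3 = p1^2 + p2^2 + γ1(q·p) + γ2(q·p)^2 + γ3(q·p)^3 (with q·p = q1 p1 + q2 p2), the function I3 = p2^2 + γ1 q2 p2 + γ2(q1^2+q2^2)p2^2 + γ3(q2^3 p2^3 + (q1^3 + 3 q1 q2^2) p2^2 p1 - q2^3 p2 p1^2) satisfies {H3, I3} = 0. -/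
/-!
Write `H3 = |p|² + V(q·p)` with `V(s) = γ1 s + γ2 s² + γ3 s³`. By the chain rule,
`{H3, I} = {|p|², I} + V'(q·p) {q·p, I}`. The function `q·p` generates the scaling
`(q, p) ↦ (λ⁻¹q, λp)`, and every term of `I3` except `p2²` has the same degree in `q` as in `p`,
so `{q·p, I3} = 2 p2²`. On the other hand the free flow gives `{|p|², I3} = -2 p·∇_q I3`,
and `p·∇_q I3 = V'(q·p) p2²`. The two contributions cancel.
-/

open Real

def kineticEnergy : ℝ → ℝ → ℝ → ℝ → ℝ := fun _ _ p1 p2 => p1 ^ 2 + p2 ^ 2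

def dilationGenerator : ℝ → ℝ → ℝ → ℝ → ℝ := fun q1 q2 p1 p2 => q1 * p1 + q2 * p2

theorem pb_kineticEnergy_add_comp_dilationGenerator (φ : ℝ → ℝ) (g : ℝ → ℝ → ℝ → ℝ → ℝ)
    (q1 q2 p1 p2 : ℝ) (hφ : DifferentiableAt ℝ φ (dilationGenerator q1 q2 p1 p2)) :
    pb (fun q1 q2 p1 p2 => kineticEnergy q1 q2 p1 p2 + φ (dilationGenerator q1 q2 p1 p2)) g
        q1 q2 p1 p2 =
      pb kineticEnergy g q1 q2 p1 p2
        + deriv φ (dilationGenerator q1 q2 p1 p2) * pb dilationGenerator g q1 q2 p1 p2 := by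
  set φ' := deriv φ (dilationGenerator q1 q2 p1 p2)
  have hφ' : HasDerivAt φ φ' (dilationGenerator q1 q2 p1 p2) := hφ.hasDerivAt
  have dq1 : HasDerivAt (fun x => p1 ^ 2 + p2 ^ 2 + φ (x * p1 + q2 * p2)) (φ' * p1) q1 :=
    (hφ'.comp q1 ((hasDerivAt_mul_const p1).add_const (q2 * p2))).const_add _
  have dq2 : HasDerivAt (fun x => p1 ^ 2 + p2 ^ 2 + φ (q1 * p1 + x * p2)) (φ' * p2) q2 :=
    (hφ'.comp q2 ((hasDerivAt_mul_const p2).const_add (q1 * p1))).const_add _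
  have dp1 : HasDerivAt (fun x => x ^ 2 + p2 ^ 2 + φ (q1 * x + q2 * p2)) (2 * p1 + φ' * q1) p1 :=
    (((hasDerivAt_pow 2 p1).add_const (p2 ^ 2)).add
      (hφ'.comp p1 ((hasDerivAt_id p1).const_mul q1 |>.add_const (q2 * p2)))).congr_deriv
      (by norm_num)
  have dp2 : HasDerivAt (fun x => p1 ^ 2 + x ^ 2 + φ (q1 * p1 + q2 * x)) (2 * p2 + φ' * q2) p2 :=
    (((hasDerivAt_pow 2 p2).const_add (p1 ^ 2)).add
      (hφ'.comp p2 ((hasDerivAt_id p2).const_mul q2 |>.const_add (q1 * p1)))).congr_deriv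
      (by norm_num)
  simp only [pb, kineticEnergy, dilationGenerator, dq1.deriv, dq2.deriv, dp1.deriv, dp2.deriv]
  simp (disch := fun_prop) only [deriv_fun_add, deriv_fun_mul, deriv_fun_pow, deriv_id'',
    deriv_const', deriv_const_mul_id]
  ring

def cubicPotential (γ1 γ2 γ3 s : ℝ) : ℝ := γ1 * s + γ2 * s ^ 2 + γ3 * s ^ 3

theorem hasDerivAt_cubicPotential (γ1 γ2 γ3 s : ℝ) :
    HasDerivAt (cubicPotential γ1 γ2 γ3) (γ1 + 2 * γ2 * s + 3 * γ3 * s ^ 2) s :=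
  ((((hasDerivAt_id s).const_mul γ1).add ((hasDerivAt_pow 2 s).const_mul γ2)).add
    ((hasDerivAt_pow 3 s).const_mul γ3)).congr_deriv (by norm_num; ring)

def cubicI3 (γ1 γ2 γ3 : ℝ) : ℝ → ℝ → ℝ → ℝ → ℝ := fun q1 q2 p1 p2 =>
  p2 ^ 2 + γ1 * q2 * p2 + γ2 * (q1 ^ 2 + q2 ^ 2) * p2 ^ 2
    + γ3 * (q2 ^ 3 * p2 ^ 3 + (q1 ^ 3 + 3 * q1 * q2 ^ 2) * p2 ^ 2 * p1 - q2 ^ 3 * p2 * p1 ^ 2)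

theorem pb_kineticEnergy_cubicI3 (γ1 γ2 γ3 q1 q2 p1 p2 : ℝ) :
    pb kineticEnergy (cubicI3 γ1 γ2 γ3) q1 q2 p1 p2 =
      -2 * (γ1 + 2 * γ2 * dilationGenerator q1 q2 p1 p2
        + 3 * γ3 * dilationGenerator q1 q2 p1 p2 ^ 2) * p2 ^ 2 := by
  simp only [pb, kineticEnergy, dilationGenerator, cubicI3]
  simp (disch := fun_prop) only [deriv_fun_add, deriv_fun_sub, deriv_fun_mul, deriv_pow_field,
    deriv_fun_pow, deriv_const', deriv_const_mul_id]
  ring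

theorem pb_dilationGenerator_cubicI3 (γ1 γ2 γ3 q1 q2 p1 p2 : ℝ) :
    pb dilationGenerator (cubicI3 γ1 γ2 γ3) q1 q2 p1 p2 = 2 * p2 ^ 2 := by
  simp only [pb, dilationGenerator, cubicI3]
  simp (disch := fun_prop) only [deriv_fun_add, deriv_fun_sub, deriv_fun_mul, deriv_pow_field,
    deriv_fun_pow, deriv_id'', deriv_const', deriv_const_mul_id]
  ring

theorem cubic_I3_is_constant_of_motion (γ1 γ2 γ3 : ℝ) :
    pb (fun q1 q2 p1 p2 =>
          p1^2 + p2^2 + γ1*(q1*p1 + q2*p2) + γ2*(q1*p1 + q2*p2)^2 + γ3*(q1*p1 + q2*p2)^3)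
       (fun q1 q2 p1 p2 =>
          p2^2 + γ1*q2*p2 + γ2*(q1^2 + q2^2)*p2^2
            + γ3*(q2^3*p2^3 + (q1^3 + 3*q1*q2^2)*p2^2*p1 - q2^3*p2*p1^2)) = 0 := by
  have hH : (fun q1 q2 p1 p2 : ℝ =>
      p1^2 + p2^2 + γ1*(q1*p1 + q2*p2) + γ2*(q1*p1 + q2*p2)^2 + γ3*(q1*p1 + q2*p2)^3) =
      fun q1 q2 p1 p2 =>
        kineticEnergy q1 q2 p1 p2 + cubicPotential γ1 γ2 γ3 (dilationGenerator q1 q2 p1 p2) := by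
    funext q1 q2 p1 p2
    simp only [kineticEnergy, cubicPotential, dilationGenerator]
    ring
  change pb _ (cubicI3 γ1 γ2 γ3) = 0
  ext q1 q2 p1 p2
  have hV := hasDerivAt_cubicPotential γ1 γ2 γ3 (dilationGenerator q1 q2 p1 p2)
  rw [hH, pb_kineticEnergy_add_comp_dilationGenerator _ _ _ _ _ _ hV.differentiableAt, hV.deriv,
    pb_kineticEnergy_cubicI3, pb_dilationGenerator_cubicI3]
  simp only [Pi.zero_apply]
  ring
end

section
/- For the quartic Hamiltonian H4 = p1^2 + p2^2 + Σ_{n=1}^4 γ_n (q1 p1 + q2 p2)^n, the function I4 = I3 + γ4((q2^4 - q1^4) p2^4 + 4(q1^3 q2 + q1 q2^3) p2^3 p1 + (q1^4 - q2^4) p2^2 p1^2) satisfies {H4, I4} = 0, where I3 = p2^2 + γ1 q2 p2 + γ2(q1^2+q2^2)p2^2 + γ3(q2^3 p2^3 + (q1^3+3q1 q2^2)p2^2 p1 - q2^3 p2 p1^2). -/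
open Real

/-!
The Hamiltonian is `H = p1² + p2² + V(J)` with `J = q1 p1 + q2 p2` the dilation generator, so for
any `I`

  `{H, I} = V'(J) · (p·∂ₚI - q·∂_qI) - 2 p·∂_qI`.

The operator `p·∂ₚ - q·∂_q` multiplies a monomial by its `p`-degree minus its `q`-degree; every
term of `I4` except `p2²` has weight zero, so the first bracket is `2 p2²`. The second one is
`V'(J) p2²`, because `p·∂_q` sends the `γₙ`-part of `I4` to `n Jⁿ⁻¹ p2²`.
-/

section PartialDerivatives

variable (f : ℝ → ℝ → ℝ → ℝ → ℝ) (q1 q2 p1 p2 : ℝ)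

noncomputable def dq1 : ℝ := deriv (fun x => f x q2 p1 p2) q1

noncomputable def dq2 : ℝ := deriv (fun x => f q1 x p1 p2) q2

noncomputable def dp1 : ℝ := deriv (fun x => f q1 q2 x p2) p1

noncomputable def dp2 : ℝ := deriv (fun x => f q1 q2 p1 x) p2

end PartialDerivatives

theorem pb_apply (f g : ℝ → ℝ → ℝ → ℝ → ℝ) (q1 q2 p1 p2 : ℝ) :
    pb f g q1 q2 p1 p2 =
      dq1 f q1 q2 p1 p2 * dp1 g q1 q2 p1 p2 + dq2 f q1 q2 p1 p2 * dp2 g q1 q2 p1 p2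
        - dp1 f q1 q2 p1 p2 * dq1 g q1 q2 p1 p2 - dp2 f q1 q2 p1 p2 * dq2 g q1 q2 p1 p2 :=
  rfl

theorem pb_kinetic_add_comp_dilation {V : ℝ → ℝ} (hV : Differentiable ℝ V)
    {H : ℝ → ℝ → ℝ → ℝ → ℝ} (hH : ∀ q1 q2 p1 p2, H q1 q2 p1 p2 = p1^2 + p2^2 + V (q1*p1 + q2*p2))
    (I : ℝ → ℝ → ℝ → ℝ → ℝ) (q1 q2 p1 p2 : ℝ) :
    pb H I q1 q2 p1 p2 =
      deriv V (q1*p1 + q2*p2) *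
          (p1 * dp1 I q1 q2 p1 p2 + p2 * dp2 I q1 q2 p1 p2
            - q1 * dq1 I q1 q2 p1 p2 - q2 * dq2 I q1 q2 p1 p2)
        - 2 * (p1 * dq1 I q1 q2 p1 p2 + p2 * dq2 I q1 q2 p1 p2) := by
  set J := q1*p1 + q2*p2
  have hV' (J : ℝ) : HasDerivAt V (deriv V J) J := (hV J).hasDerivAt
  have hq1 : dq1 H q1 q2 p1 p2 = deriv V J * p1 := by
    simp only [dq1, hH]
    exact (((hV' _).comp q1 (((hasDerivAt_id q1).mul_const p1).add_const _)).const_add _).deriv.trans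
      (by simp [J])
  have hq2 : dq2 H q1 q2 p1 p2 = deriv V J * p2 := by
    simp only [dq2, hH]
    exact (((hV' _).comp q2 (((hasDerivAt_id q2).mul_const p2).const_add _)).const_add _).deriv.trans
      (by simp [J])
  have hp1 : dp1 H q1 q2 p1 p2 = 2 * p1 + deriv V J * q1 := by
    simp only [dp1, hH]
    exact ((((hasDerivAt_pow 2 p1).add_const _).add
      ((hV' _).comp p1 (((hasDerivAt_id p1).const_mul q1).add_const _)))).deriv.trans (by simp [J])
  have hp2 : dp2 H q1 q2 p1 p2 = 2 * p2 + deriv V J * q2 := by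
    simp only [dp2, hH]
    exact ((((hasDerivAt_pow 2 p2).const_add _).add
      ((hV' _).comp p2 (((hasDerivAt_id p2).const_mul q2).const_add _)))).deriv.trans (by simp [J])
  rw [pb_apply, hq1, hq2, hp1, hp2]
  ring

section QuarticIntegral

variable (γ1 γ2 γ3 γ4 : ℝ)

def quarticPotential (s : ℝ) : ℝ := γ1*s + γ2*s^2 + γ3*s^3 + γ4*s^4

theorem differentiable_quarticPotential : Differentiable ℝ (quarticPotential γ1 γ2 γ3 γ4) := by
  unfold quarticPotential
  fun_prop

theorem deriv_quarticPotential (s : ℝ) :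
    deriv (quarticPotential γ1 γ2 γ3 γ4) s = γ1 + 2*γ2*s + 3*γ3*s^2 + 4*γ4*s^3 := by
  unfold quarticPotential
  simp (disch := fun_prop) only [deriv_fun_add, deriv_fun_mul, deriv_fun_pow, deriv_id'',
    deriv_const, deriv_const_mul_id]
  ring

def cubicIntegral (q1 q2 p1 p2 : ℝ) : ℝ :=
  p2^2 + γ1*q2*p2 + γ2*(q1^2 + q2^2)*p2^2
    + γ3*(q2^3*p2^3 + (q1^3 + 3*q1*q2^2)*p2^2*p1 - q2^3*p2*p1^2)

def quarticIntegral (q1 q2 p1 p2 : ℝ) : ℝ :=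
  cubicIntegral γ1 γ2 γ3 q1 q2 p1 p2
    + γ4*((q2^4 - q1^4)*p2^4 + 4*(q1^3*q2 + q1*q2^3)*p2^3*p1 + (q1^4 - q2^4)*p2^2*p1^2)

variable (q1 q2 p1 p2 : ℝ)

theorem dq1_quarticIntegral :
    dq1 (quarticIntegral γ1 γ2 γ3 γ4) q1 q2 p1 p2 =
      2*γ2*q1*p2^2 + 3*γ3*(q1^2 + q2^2)*p2^2*p1
        + 4*γ4*(-q1^3*p2^4 + (3*q1^2*q2 + q2^3)*p2^3*p1 + q1^3*p2^2*p1^2) := by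
  simp only [dq1, quarticIntegral, cubicIntegral]
  simp (disch := fun_prop) only [deriv_fun_add, deriv_fun_sub, deriv_fun_mul, deriv_fun_pow,
    deriv_id'', deriv_const, deriv_const_mul_id]
  ring

theorem dq2_quarticIntegral :
    dq2 (quarticIntegral γ1 γ2 γ3 γ4) q1 q2 p1 p2 =
      γ1*p2 + 2*γ2*q2*p2^2 + 3*γ3*(q2^2*p2^3 + 2*q1*q2*p2^2*p1 - q2^2*p2*p1^2)
        + 4*γ4*(q2^3*p2^4 + (q1^3 + 3*q1*q2^2)*p2^3*p1 - q2^3*p2^2*p1^2) := by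
  simp only [dq2, quarticIntegral, cubicIntegral]
  simp (disch := fun_prop) only [deriv_fun_add, deriv_fun_sub, deriv_fun_mul, deriv_fun_pow,
    deriv_id'', deriv_const, deriv_const_mul_id]
  ring

theorem dp1_quarticIntegral :
    dp1 (quarticIntegral γ1 γ2 γ3 γ4) q1 q2 p1 p2 =
      γ3*((q1^3 + 3*q1*q2^2)*p2^2 - 2*q2^3*p2*p1)
        + γ4*(4*(q1^3*q2 + q1*q2^3)*p2^3 + 2*(q1^4 - q2^4)*p2^2*p1) := by
  simp only [dp1, quarticIntegral, cubicIntegral]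
  simp (disch := fun_prop) only [deriv_fun_add, deriv_fun_sub, deriv_fun_mul, deriv_fun_pow,
    deriv_id'', deriv_const, deriv_const_mul_id]
  ring

theorem dp2_quarticIntegral :
    dp2 (quarticIntegral γ1 γ2 γ3 γ4) q1 q2 p1 p2 =
      2*p2 + γ1*q2 + 2*γ2*(q1^2 + q2^2)*p2
        + γ3*(3*q2^3*p2^2 + 2*(q1^3 + 3*q1*q2^2)*p2*p1 - q2^3*p1^2)
        + γ4*(4*(q2^4 - q1^4)*p2^3 + 12*(q1^3*q2 + q1*q2^3)*p2^2*p1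
          + 2*(q1^4 - q2^4)*p2*p1^2) := by
  simp only [dp2, quarticIntegral, cubicIntegral]
  simp (disch := fun_prop) only [deriv_fun_add, deriv_fun_sub, deriv_fun_mul, deriv_fun_pow,
    deriv_id'', deriv_const, deriv_const_mul_id]
  ring

theorem quarticIntegral_weight :
    p1 * dp1 (quarticIntegral γ1 γ2 γ3 γ4) q1 q2 p1 p2
        + p2 * dp2 (quarticIntegral γ1 γ2 γ3 γ4) q1 q2 p1 p2
        - q1 * dq1 (quarticIntegral γ1 γ2 γ3 γ4) q1 q2 p1 p2
        - q2 * dq2 (quarticIntegral γ1 γ2 γ3 γ4) q1 q2 p1 p2 = 2 * p2^2 := by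
  rw [dq1_quarticIntegral, dq2_quarticIntegral, dp1_quarticIntegral, dp2_quarticIntegral]
  ring

theorem quarticIntegral_free_flow :
    p1 * dq1 (quarticIntegral γ1 γ2 γ3 γ4) q1 q2 p1 p2
        + p2 * dq2 (quarticIntegral γ1 γ2 γ3 γ4) q1 q2 p1 p2
      = deriv (quarticPotential γ1 γ2 γ3 γ4) (q1*p1 + q2*p2) * p2^2 := by
  rw [dq1_quarticIntegral, dq2_quarticIntegral, deriv_quarticPotential]
  ring

end QuarticIntegral

theorem quartic_I4_is_constant_of_motion (γ1 γ2 γ3 γ4 : ℝ) :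
    pb (fun q1 q2 p1 p2 =>
          p1^2 + p2^2 + γ1*(q1*p1 + q2*p2) + γ2*(q1*p1 + q2*p2)^2
            + γ3*(q1*p1 + q2*p2)^3 + γ4*(q1*p1 + q2*p2)^4)
       (fun q1 q2 p1 p2 =>
          (p2^2 + γ1*q2*p2 + γ2*(q1^2 + q2^2)*p2^2
            + γ3*(q2^3*p2^3 + (q1^3 + 3*q1*q2^2)*p2^2*p1 - q2^3*p2*p1^2))
          + γ4*((q2^4 - q1^4)*p2^4 + 4*(q1^3*q2 + q1*q2^3)*p2^3*p1
                + (q1^4 - q2^4)*p2^2*p1^2)) = 0 := by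
  funext q1 q2 p1 p2
  change pb _ (quarticIntegral γ1 γ2 γ3 γ4) q1 q2 p1 p2 = 0
  rw [pb_kinetic_add_comp_dilation (differentiable_quarticPotential γ1 γ2 γ3 γ4)
      (fun _ _ _ _ => by rw [quarticPotential]; ring),
    quarticIntegral_weight, quarticIntegral_free_flow]
  ring
end

section
/- For N = 3, with I3 as above, I3' obtained from I3 by interchanging indices 1↔2 in positions and momenta, C = q1 p2 - q2 p1, and H3 = p1^2 + p2^2 + Σ_{n=1}^3 γ_n (q1 p1 + q2 p2)^n, the polynomial identity H3 = I3 + I3' - γ2 C^2 holds. -/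
theorem cubic_H3_identity (γ1 γ2 γ3 : ℝ) (q1 q2 p1 p2 : ℝ) :
    p1^2 + p2^2 + γ1*(q1*p1 + q2*p2) + γ2*(q1*p1 + q2*p2)^2 + γ3*(q1*p1 + q2*p2)^3
      = (p2^2 + γ1*q2*p2 + γ2*(q1^2 + q2^2)*p2^2
          + γ3*(q2^3*p2^3 + (q1^3 + 3*q1*q2^2)*p2^2*p1 - q2^3*p2*p1^2))
      + (p1^2 + γ1*q1*p1 + γ2*(q2^2 + q1^2)*p1^2
          + γ3*(q1^3*p1^3 + (q2^3 + 3*q2*q1^2)*p1^2*p2 - q1^3*p1*p2^2))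
      - γ2*(q1*p2 - q2*p1)^2 := by
  ring
end

section
/- For N = 4, the identity H4 = I4 + I4' - γ2 C^2 + γ4 C^4 holds, where H4 = p1^2+p2^2+Σ_{n=1}^4 γ_n(q1 p1+q2 p2)^n, C = q1 p2 - q2 p1, I4 is the quartic integral and I4' is its image under the index interchange 1↔2. -/
theorem quartic_H4_identity (γ1 γ2 γ3 γ4 : ℝ) (q1 q2 p1 p2 : ℝ) :
    p1^2 + p2^2 + γ1*(q1*p1 + q2*p2) + γ2*(q1*p1 + q2*p2)^2
        + γ3*(q1*p1 + q2*p2)^3 + γ4*(q1*p1 + q2*p2)^4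
      = ((p2^2 + γ1*q2*p2 + γ2*(q1^2 + q2^2)*p2^2
          + γ3*(q2^3*p2^3 + (q1^3 + 3*q1*q2^2)*p2^2*p1 - q2^3*p2*p1^2))
         + γ4*((q2^4 - q1^4)*p2^4 + 4*(q1^3*q2 + q1*q2^3)*p2^3*p1
               + (q1^4 - q2^4)*p2^2*p1^2))
      + ((p1^2 + γ1*q1*p1 + γ2*(q2^2 + q1^2)*p1^2
          + γ3*(q1^3*p1^3 + (q2^3 + 3*q2*q1^2)*p1^2*p2 - q1^3*p1*p2^2))
         + γ4*((q1^4 - q2^4)*p1^4 + 4*(q2^3*q1 + q2*q1^3)*p1^3*p2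
               + (q2^4 - q1^4)*p1^2*p2^2))
      - γ2*(q1*p2 - q2*p1)^2 + γ4*(q1*p2 - q2*p1)^4 := by
  ring
end

section
/- The functions J01 = cos φ p_ρ - (sin φ / T_κ(ρ)) p_φ, J02 = sin φ p_ρ + (cos φ / T_κ(ρ)) p_φ, J12 = p_φ satisfy the Poisson brackets {J12, J01} = J02, {J12, J02} = -J01, {J01, J02} = κ J12, where for κ > 0, T_κ(ρ) = tan(√κ ρ)/√κ. -/
open Real

/-- κ-tangent for κ > 0. -/
noncomputable def Tk (κ x : ℝ) : ℝ := Real.tan (Real.sqrt κ * x) / Real.sqrt κ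

/-!
Only the radial profile `T` enters: for every differentiable `T` with `T ρ ≠ 0`, the generators
built from `T` satisfy `{J01, J02} = (T' - 1) / T² · p_φ`, while bracketing with `J12 = p_φ` just
differentiates in `φ`, which rotates `(J01, J02)`. The κ-tangent solves the Riccati equation
`T' = 1 + κ T²`, which turns the first bracket into `κ p_φ`.
-/

theorem pb_snd_momentum_left (g : ℝ → ℝ → ℝ → ℝ → ℝ) (q1 q2 p1 p2 : ℝ) :
    pb (fun _ _ _ p => p) g q1 q2 p1 p2 = -deriv (fun x => g q1 x p1 p2) q2 := by
  simp [pb]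

theorem hasDerivAt_Tk {κ x : ℝ} (hκ : 0 < κ) (hc : cos (√κ * x) ≠ 0) :
    HasDerivAt (Tk κ) (1 + κ * Tk κ x ^ 2) x := by
  have h : HasDerivAt (Tk κ) (1 / cos (√κ * x) ^ 2 * (√κ * 1) / √κ) x :=
    ((hasDerivAt_tan hc).comp x ((hasDerivAt_id x).const_mul √κ)).div_const √κ
  refine h.congr_deriv ?_
  have hr : √κ ≠ 0 := (sqrt_pos.2 hκ).ne'
  rw [Tk, div_pow, sq_sqrt hκ.le, ← inv_one_add_tan_sq hc]
  field_simp

section Generators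

variable (T : ℝ → ℝ)

noncomputable def translationGen₁ (ρ φ pρ pφ : ℝ) : ℝ := cos φ * pρ - sin φ / T ρ * pφ

noncomputable def translationGen₂ (ρ φ pρ pφ : ℝ) : ℝ := sin φ * pρ + cos φ / T ρ * pφ

variable (ρ φ pρ pφ : ℝ)

theorem hasDerivAt_translationGen₁_angle :
    HasDerivAt (fun x => translationGen₁ T ρ x pρ pφ) (-translationGen₂ T ρ φ pρ pφ) φ := by
  have h := ((hasDerivAt_cos φ).mul_const pρ).sub (((hasDerivAt_sin φ).div_const (T ρ)).mul_const pφ)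
  exact h.congr_deriv (by unfold translationGen₂; ring)

theorem hasDerivAt_translationGen₂_angle :
    HasDerivAt (fun x => translationGen₂ T ρ x pρ pφ) (translationGen₁ T ρ φ pρ pφ) φ := by
  have h := ((hasDerivAt_sin φ).mul_const pρ).add (((hasDerivAt_cos φ).div_const (T ρ)).mul_const pφ)
  exact h.congr_deriv (by unfold translationGen₁; ring)

theorem hasDerivAt_translationGen₁_radial {T' : ℝ} (hT : HasDerivAt T T' ρ) (h0 : T ρ ≠ 0) :
    HasDerivAt (fun x => translationGen₁ T x φ pρ pφ) (sin φ * T' / T ρ ^ 2 * pφ) ρ := by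
  have h := (((hasDerivAt_const ρ (sin φ)).div hT h0).mul_const pφ).const_sub (cos φ * pρ)
  exact h.congr_deriv (by ring)

theorem hasDerivAt_translationGen₂_radial {T' : ℝ} (hT : HasDerivAt T T' ρ) (h0 : T ρ ≠ 0) :
    HasDerivAt (fun x => translationGen₂ T x φ pρ pφ) (-(cos φ * T' / T ρ ^ 2 * pφ)) ρ := by
  have h := (((hasDerivAt_const ρ (cos φ)).div hT h0).mul_const pφ).const_add (sin φ * pρ)
  exact h.congr_deriv (by ring)

theorem deriv_translationGen₁_radialMomentum : deriv (fun x => translationGen₁ T ρ φ x pφ) pρ = cos φ := by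
  unfold translationGen₁; simp

theorem deriv_translationGen₁_angularMomentum :
    deriv (fun x => translationGen₁ T ρ φ pρ x) pφ = -(sin φ / T ρ) := by
  unfold translationGen₁; simp

theorem deriv_translationGen₂_radialMomentum : deriv (fun x => translationGen₂ T ρ φ x pφ) pρ = sin φ := by
  unfold translationGen₂; simp

theorem deriv_translationGen₂_angularMomentum :
    deriv (fun x => translationGen₂ T ρ φ pρ x) pφ = cos φ / T ρ := by
  unfold translationGen₂; simp

theorem pb_angularMomentum_translationGen₁ :
    pb (fun _ _ _ p => p) (translationGen₁ T) ρ φ pρ pφ = translationGen₂ T ρ φ pρ pφ := by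
  rw [pb_snd_momentum_left, (hasDerivAt_translationGen₁_angle T ρ φ pρ pφ).deriv, neg_neg]

theorem pb_angularMomentum_translationGen₂ :
    pb (fun _ _ _ p => p) (translationGen₂ T) ρ φ pρ pφ = -translationGen₁ T ρ φ pρ pφ := by
  rw [pb_snd_momentum_left, (hasDerivAt_translationGen₂_angle T ρ φ pρ pφ).deriv]

theorem pb_translationGen₁_translationGen₂ {T' : ℝ} (hT : HasDerivAt T T' ρ) (h0 : T ρ ≠ 0) :
    pb (translationGen₁ T) (translationGen₂ T) ρ φ pρ pφ = (T' - 1) / T ρ ^ 2 * pφ := by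
  simp only [pb]
  rw [(hasDerivAt_translationGen₁_radial T ρ φ pρ pφ hT h0).deriv,
    (hasDerivAt_translationGen₂_radial T ρ φ pρ pφ hT h0).deriv,
    (hasDerivAt_translationGen₁_angle T ρ φ pρ pφ).deriv, (hasDerivAt_translationGen₂_angle T ρ φ pρ pφ).deriv,
    deriv_translationGen₁_radialMomentum, deriv_translationGen₁_angularMomentum,
    deriv_translationGen₂_radialMomentum, deriv_translationGen₂_angularMomentum, translationGen₁, translationGen₂]
  field_simp
  linear_combination (T' * pφ - pφ) * sin_sq_add_cos_sq φ

end Generators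

theorem isometry_generators_brackets (κ : ℝ) (hκ : 0 < κ)
    (J01 J02 J12 : ℝ → ℝ → ℝ → ℝ → ℝ)
    (hJ01 : J01 = fun ρ φ pρ pφ => Real.cos φ * pρ - (Real.sin φ / Tk κ ρ) * pφ)
    (hJ02 : J02 = fun ρ φ pρ pφ => Real.sin φ * pρ + (Real.cos φ / Tk κ ρ) * pφ)
    (hJ12 : J12 = fun ρ φ pρ pφ => pφ) :
    ∀ ρ φ pρ pφ : ℝ, Tk κ ρ ≠ 0 → Real.cos (Real.sqrt κ * ρ) ≠ 0 →
      pb J12 J01 ρ φ pρ pφ = J02 ρ φ pρ pφ ∧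
      pb J12 J02 ρ φ pρ pφ = -J01 ρ φ pρ pφ ∧
      pb J01 J02 ρ φ pρ pφ = κ * J12 ρ φ pρ pφ := by
  intro ρ φ pρ pφ hT hc
  obtain rfl : J01 = translationGen₁ (Tk κ) := hJ01
  obtain rfl : J02 = translationGen₂ (Tk κ) := hJ02
  subst hJ12
  refine ⟨pb_angularMomentum_translationGen₁ .., pb_angularMomentum_translationGen₂ .., ?_⟩
  rw [pb_translationGen₁_translationGen₂ (Tk κ) ρ φ pρ pφ (hasDerivAt_Tk hκ hc) hT]
  field_simp
  ring
end
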